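/- arXiv:2505.10889 — 4 statements merged into one kernel-verified Lean document; each statement's English description precedes it below -/
import Mathlib

section
/- Let (a_n)_{n≥1} be a sequence of nonnegative real numbers and (ε_n)_{n≥1} a sequence of positive real numbers such that ∑_{n=1}^∞ ε_n = ∞, ∑_{n=1}^∞ ε_n a_n < ∞, and there is a constant K > 0 with |a_{n+1} − a_n| ≤ K ε_n for all n. Then a_n → 0 as n → ∞. -/
open Filter

/-- Deterministic interval-crossing lemma: a nonnegative sequence with non-summable positive
step sizes, summable weighted values, and increments controlled by the step sizes converges
to zero. -/
theorem tendsto_zero_of_weighted_summable_of_increments (a ε : ℕ → ℝ)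
    (ha : ∀ n, 0 ≤ a n) (hε : ∀ n, 0 < ε n)
    (hdiv : ¬ Summable ε) (hsum : Summable fun n => ε n * a n)
    (K : ℝ) (hK : 0 < K) (hinc : ∀ n, |a (n + 1) - a n| ≤ K * ε n) :
    Tendsto a atTop (nhds 0) := by
  -- liminf step: beyond any N there is n with a n < δ/2
  have hlim : ∀ δ : ℝ, 0 < δ → ∀ N : ℕ, ∃ n, N ≤ n ∧ a n < δ / 2 := by
    intro δ hδ N
    by_contra hcon
    push_neg at hcon
    apply hdiv
    rw [← summable_nat_add_iff N]
    have hshift : Summable fun n => (2 / δ) * (ε (n + N) * a (n + N)) :=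
      ((summable_nat_add_iff N).mpr hsum).mul_left _
    refine Summable.of_nonneg_of_le (fun n => (hε _).le) (fun n => ?_) hshift
    have h1 : δ / 2 ≤ a (n + N) := hcon (n + N) (Nat.le_add_left _ _)
    have h2 : ε (n + N) * (δ / 2) ≤ ε (n + N) * a (n + N) :=
      mul_le_mul_of_nonneg_left h1 (hε _).le
    have hδ2 : (0:ℝ) < δ / 2 := by positivity
    calc ε (n + N) = (2 / δ) * (ε (n + N) * (δ / 2)) := by
          field_simp
      _ ≤ (2 / δ) * (ε (n + N) * a (n + N)) := by
          apply mul_le_mul_of_nonneg_left h2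
          positivity
  by_contra hcon
  rw [Metric.tendsto_atTop] at hcon
  push_neg at hcon
  obtain ⟨δ, hδ, hfreq⟩ := hcon
  -- Cauchy property of partial sums of ε * a
  set S : ℕ → ℝ := fun m => ∑ k ∈ Finset.range m, ε k * a k with hS
  have hcauchy : CauchySeq S := hsum.hasSum.tendsto_sum_nat.cauchySeq
  rw [Metric.cauchySeq_iff'] at hcauchy
  have hc : (0:ℝ) < δ ^ 2 / (4 * K) := by positivity
  obtain ⟨N, hN⟩ := hcauchy (δ ^ 2 / (4 * K)) hc
  -- find p ≥ N with a p ≥ δ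
  obtain ⟨p, hpN, hap⟩ := hfreq N
  rw [Real.dist_eq, sub_zero, abs_of_nonneg (ha p)] at hap
  -- find least q > p with a q < δ/2
  obtain ⟨q', hq'p, haq'⟩ := hlim δ hδ (p + 1)
  have hexq : ∃ q, p + 1 ≤ q ∧ a q < δ / 2 := ⟨q', hq'p, haq'⟩
  classical
  set q := Nat.find hexq with hqdef
  obtain ⟨hqp, haq⟩ := Nat.find_spec hexq
  have hmin : ∀ k, p ≤ k → k < q → δ / 2 ≤ a k := by
    intro k hpk hkq
    rcases eq_or_lt_of_le hpk with rfl | hpk'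
    · linarith
    · by_contra h
      push_neg at h
      exact absurd ⟨hpk', h⟩ (Nat.find_min hexq hkq)
  -- telescoping bound: a p - a q ≤ K * ∑_{Ico p q} ε
  have htel : ∀ m, p ≤ m → a p - a m ≤ K * ∑ k ∈ Finset.Ico p m, ε k := by
    intro m hm
    induction m, hm using Nat.le_induction with
    | base => simp
    | succ m hm ih =>
      have h1 : a m - a (m + 1) ≤ K * ε m := by
        have := hinc m
        rw [abs_le] at this
        linarith [this.1]
      rw [Finset.sum_Ico_succ_top hm]
      have : a p - a (m + 1) = (a p - a m) + (a m - a (m + 1)) := by ring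
      rw [this, mul_add]
      exact add_le_add ih h1
  have hpq : p ≤ q := le_trans (Nat.le_succ p) hqp
  have hsumε : δ / (2 * K) ≤ ∑ k ∈ Finset.Ico p q, ε k := by
    have h1 : δ / 2 ≤ a p - a q := by linarith
    have h2 := htel q hpq
    have h2' : δ / 2 ≤ K * ∑ k ∈ Finset.Ico p q, ε k := le_trans h1 h2
    rw [div_le_iff₀ (by positivity : (0:ℝ) < 2 * K)]
    nlinarith [h2']
  -- lower bound on the weighted block sum
  have hblock : δ ^ 2 / (4 * K) ≤ ∑ k ∈ Finset.Ico p q, ε k * a k := by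
    have h1 : ∑ k ∈ Finset.Ico p q, ε k * (δ / 2) ≤ ∑ k ∈ Finset.Ico p q, ε k * a k := by
      apply Finset.sum_le_sum
      intro k hk
      rw [Finset.mem_Ico] at hk
      exact mul_le_mul_of_nonneg_left (hmin k hk.1 hk.2) (hε k).le
    have h2 : ∑ k ∈ Finset.Ico p q, ε k * (δ / 2) = (δ / 2) * ∑ k ∈ Finset.Ico p q, ε k := by
      rw [Finset.mul_sum]; apply Finset.sum_congr rfl; intros; ring
    have h3 : δ ^ 2 / (4 * K) = (δ / 2) * (δ / (2 * K)) := by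
      field_simp; ring
    rw [h3]
    calc (δ / 2) * (δ / (2 * K)) ≤ (δ / 2) * ∑ k ∈ Finset.Ico p q, ε k := by
          apply mul_le_mul_of_nonneg_left hsumε; positivity
      _ = ∑ k ∈ Finset.Ico p q, ε k * (δ / 2) := h2.symm
      _ ≤ _ := h1
  -- upper bound from Cauchy property
  have hupper : ∑ k ∈ Finset.Ico p q, ε k * a k < δ ^ 2 / (4 * K) := by
    have h1 : ∑ k ∈ Finset.Ico p q, ε k * a k ≤ ∑ k ∈ Finset.Ico N q, ε k * a k := by
      apply Finset.sum_le_sum_of_subset_of_nonneg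
      · exact Finset.Ico_subset_Ico hpN le_rfl
      · intro k _ _
        exact mul_nonneg (hε k).le (ha k)
    have hNq : N ≤ q := le_trans hpN hpq
    have h2 : ∑ k ∈ Finset.Ico N q, ε k * a k = S q - S N :=
      Finset.sum_Ico_eq_sub _ hNq
    have h3 := hN q hNq
    rw [Real.dist_eq] at h3
    have h4 : S q - S N ≤ |S q - S N| := le_abs_self _
    linarith
  linarith
end

section
/- Let T ≥ 2 be an integer, C ≥ 0, and let b_1,…,b_T be real numbers. For 0 ≤ k ≤ T−1, let S_k = (1/(k+1)) ∑_{t=T−k}^{T} b_t be the average of the last k+1 terms. Suppose that for every k with 1 ≤ k ≤ T−1 one has S_k − b_{T−k} ≤ C. Then b_T ≤ S_{T−1} + C ∑_{k=1}^{T−1} 1/k. -/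
/-- Suffix-averaging argument: if `S_k` is the average of the last `k+1` terms
`b_{T-k}, …, b_T` and `S_k - b_{T-k} ≤ C` for `1 ≤ k ≤ T-1`, then
`b_T ≤ S_{T-1} + C ∑_{k=1}^{T-1} 1/k`. -/
theorem last_term_le_suffix_average (T : ℕ) (hT : 2 ≤ T) (C : ℝ) (hC : 0 ≤ C)
    (b : ℕ → ℝ) (S : ℕ → ℝ)
    (hS : ∀ k, k ≤ T - 1 → S k = ((k : ℝ) + 1)⁻¹ * ∑ t ∈ Finset.Icc (T - k) T, b t)
    (hrec : ∀ k, 1 ≤ k → k ≤ T - 1 → S k - b (T - k) ≤ C) :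
    b T ≤ S (T - 1) + C * ∑ k ∈ Finset.Icc 1 (T - 1), 1 / (k : ℝ) := by
  have key : ∀ m, m ≤ T - 1 → b T ≤ S m + C * ∑ k ∈ Finset.Icc 1 m, 1 / (k : ℝ) := by
    intro m
    induction m with
    | zero =>
      intro _
      have h0 := hS 0 (by omega)
      simp at h0
      simp [h0]
    | succ m ih =>
      intro hm
      have ihm := ih (by omega)
      -- step: S m ≤ S (m+1) + C / (m+1)
      have hm1 : (m : ℕ) + 1 ≤ T - 1 := hm
      have hSm := hS m (by omega)
      have hSm1 := hS (m + 1) (by omega)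
      -- split sum
      have hsplit : ∑ t ∈ Finset.Icc (T - (m + 1)) T, b t
          = b (T - (m + 1)) + ∑ t ∈ Finset.Icc (T - m) T, b t := by
        have hle : T - (m + 1) ≤ T := by omega
        rw [Finset.Icc_eq_cons_Ioc hle, Finset.sum_cons]
        congr 1
        have : T - (m + 1) + 1 = T - m := by omega
        rw [← this, ← Finset.Icc_add_one_left_eq_Ioc]
      have hrec1 := hrec (m + 1) (by omega) (by omega)
      have hmpos : (0 : ℝ) < (m : ℝ) + 1 := by positivity
      have hstep : S m ≤ S (m + 1) + C / ((m : ℝ) + 1) := by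
        have hsum_m : ∑ t ∈ Finset.Icc (T - m) T, b t = ((m : ℝ) + 1) * S m := by
          rw [hSm]; field_simp
        have hsum_m1 : ((m : ℝ) + 1 + 1) * S (m + 1)
            = b (T - (m + 1)) + ((m : ℝ) + 1) * S m := by
          rw [hSm1, hsplit, hsum_m]
          push_cast
          field_simp
        have h3 : S m ≤ (((m : ℝ) + 1) * S (m + 1) + C) / ((m : ℝ) + 1) := by
          rw [le_div_iff₀ hmpos]
          push_cast at hsum_m1
          nlinarith [hrec1, hsum_m1]
        have h4 : (((m : ℝ) + 1) * S (m + 1) + C) / ((m : ℝ) + 1)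
            = S (m + 1) + C / ((m : ℝ) + 1) := by
          field_simp
        linarith [h3, h4.le, h4.ge]
      have hsum1 : ∑ k ∈ Finset.Icc 1 (m + 1), 1 / (k : ℝ)
          = (∑ k ∈ Finset.Icc 1 m, 1 / (k : ℝ)) + 1 / ((m : ℝ) + 1) := by
        rw [Finset.sum_Icc_succ_top (by omega)]
        push_cast; ring
      rw [hsum1]
      have : C * ((∑ k ∈ Finset.Icc 1 m, 1 / (k : ℝ)) + 1 / ((m : ℝ) + 1))
          = C * (∑ k ∈ Finset.Icc 1 m, 1 / (k : ℝ)) + C / ((m : ℝ) + 1) := by ring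
      rw [this]
      linarith
  exact key (T - 1) le_rfl
end

section
/- Let f : ℝ^N → ℝ be continuously differentiable with gradient satisfying the Lipschitz condition ‖∇f(x) − ∇f(y)‖ ≤ c ‖x − y‖ for all x, y ∈ ℝ^N, and suppose f* = inf_{x ∈ ℝ^N} f(x) > −∞. Then for every x₀ ∈ ℝ^N, ‖∇f(x₀)‖² ≤ 2c (f(x₀) − f*). -/
open RealInnerProductSpace

/-- Descent lemma: if the gradient is `c`-Lipschitz then
`f (x + v) ≤ f x + ⟪∇f x, v⟫ + c/2 ‖v‖²`. -/
lemma descent_lemma_aux {N : ℕ} (f : EuclideanSpace ℝ (Fin N) → ℝ) (c : ℝ) (hc : 0 < c)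
    (hf : ContDiff ℝ 1 f)
    (hlip : ∀ x y, ‖gradient f x - gradient f y‖ ≤ c * ‖x - y‖)
    (x v : EuclideanSpace ℝ (Fin N)) :
    f (x + v) ≤ f x + ⟪gradient f x, v⟫ + c / 2 * ‖v‖ ^ 2 := by
  have hdiff : Differentiable ℝ f := hf.differentiable one_ne_zero
  set g := gradient f with hg
  have hfd : ∀ z, HasFDerivAt f ((InnerProductSpace.toDual ℝ _) (g z)) z := fun z =>
    ((hdiff z).hasGradientAt).hasFDerivAt
  set φ : ℝ → ℝ := fun t => f (x + t • v) - t * ⟪g x, v⟫ - c / 2 * t ^ 2 * ‖v‖ ^ 2 with hφ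
  have hφd : ∀ t : ℝ, HasDerivAt φ
      (⟪g (x + t • v), v⟫ - ⟪g x, v⟫ - c * t * ‖v‖ ^ 2) t := by
    intro t
    have h1 : HasDerivAt (fun t : ℝ => x + t • v) v t := by
      simpa using ((hasDerivAt_id t).smul_const v).const_add x
    have h2 : HasDerivAt (fun t : ℝ => f (x + t • v)) (⟪g (x + t • v), v⟫) t := by
      have := (hfd (x + t • v)).comp_hasDerivAt t h1
      simp [InnerProductSpace.toDual_apply_apply] at this
      exact this
    have h3 : HasDerivAt (fun t : ℝ => t * ⟪g x, v⟫) (⟪g x, v⟫) t := by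
      simpa using (hasDerivAt_id t).mul_const (⟪g x, v⟫)
    have h5 : HasDerivAt (fun t : ℝ => t ^ 2) (2 * t) t := by
      simpa using hasDerivAt_pow 2 t
    have h4 : HasDerivAt (fun t : ℝ => c / 2 * t ^ 2 * ‖v‖ ^ 2) (c * t * ‖v‖ ^ 2) t := by
      have := (h5.const_mul (c / 2)).mul_const (‖v‖ ^ 2)
      rw [show c * t * ‖v‖ ^ 2 = c / 2 * (2 * t) * ‖v‖ ^ 2 by ring]
      exact this
    exact (h2.sub h3).sub h4
  have hcont : Continuous φ := by
    have : Differentiable ℝ φ := fun t => (hφd t).differentiableAt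
    exact this.continuous
  have hanti : AntitoneOn φ (Set.Icc 0 1) := by
    apply antitoneOn_of_deriv_nonpos (convex_Icc 0 1) hcont.continuousOn
    · intro t ht
      exact (hφd t).differentiableAt.differentiableWithinAt
    · intro t ht
      rw [interior_Icc] at ht
      rw [(hφd t).deriv]
      have h6 : ⟪g (x + t • v) - g x, v⟫ ≤ ‖g (x + t • v) - g x‖ * ‖v‖ :=
        real_inner_le_norm _ _
      have h7 : ‖g (x + t • v) - g x‖ ≤ c * (t * ‖v‖) := by
        have := hlip (x + t • v) x
        simpa [norm_smul, abs_of_pos ht.1, mul_assoc] using this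
      have h8 : ⟪g (x + t • v), v⟫ - ⟪g x, v⟫ = ⟪g (x + t • v) - g x, v⟫ := by
        rw [inner_sub_left]
      have hv : (0:ℝ) ≤ ‖v‖ := norm_nonneg _
      nlinarith [mul_le_mul_of_nonneg_right h7 hv]
  have := hanti (Set.mem_Icc.mpr ⟨le_refl 0, zero_le_one⟩)
    (Set.mem_Icc.mpr ⟨zero_le_one, le_refl 1⟩) zero_le_one
  simp only [hφ, one_smul, zero_smul, add_zero, one_mul, zero_mul, one_pow] at this
  linarith

/-- If `f` is continuously differentiable with `c`-Lipschitz gradient and bounded below,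
then `‖∇f(x₀)‖² ≤ 2c (f(x₀) − inf f)`. -/
theorem sq_norm_gradient_le_of_lipschitz_gradient {N : ℕ}
    (f : EuclideanSpace ℝ (Fin N) → ℝ) (c : ℝ) (hc : 0 < c)
    (hf : ContDiff ℝ 1 f)
    (hlip : ∀ x y, ‖gradient f x - gradient f y‖ ≤ c * ‖x - y‖)
    (hbdd : BddBelow (Set.range f)) (x₀ : EuclideanSpace ℝ (Fin N)) :
    ‖gradient f x₀‖ ^ 2 ≤ 2 * c * (f x₀ - ⨅ x, f x) := by
  set g := gradient f x₀ with hgdef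
  set v : EuclideanSpace ℝ (Fin N) := -(c⁻¹ • g) with hv
  have hdesc := descent_lemma_aux f c hc hf hlip x₀ v
  have hinner : ⟪g, v⟫ = -(c⁻¹ * ‖g‖ ^ 2) := by
    rw [hv, inner_neg_right, real_inner_smul_right, real_inner_self_eq_norm_sq]
  have hnv : ‖v‖ ^ 2 = c⁻¹ ^ 2 * ‖g‖ ^ 2 := by
    rw [hv, norm_neg, norm_smul, mul_pow]
    simp [abs_of_pos (inv_pos.mpr hc)]
  have hinf : (⨅ x, f x) ≤ f (x₀ + v) := ciInf_le hbdd _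
  rw [hinner, hnv] at hdesc
  have hc' : c ≠ 0 := ne_of_gt hc
  have h2c : (0:ℝ) < 2 * c := by linarith
  have e : f x₀ + -(c⁻¹ * ‖g‖ ^ 2) + c / 2 * (c⁻¹ ^ 2 * ‖g‖ ^ 2)
      = f x₀ - ‖g‖ ^ 2 / (2 * c) := by
    field_simp
    ring
  rw [e] at hdesc
  have h9 : ‖g‖ ^ 2 / (2 * c) ≤ f x₀ - ⨅ x, f x := by linarith [hinf.trans hdesc]
  rw [div_le_iff₀ h2c] at h9
  linarith
end

section
/- Let 0 < μ < 1 and 0 < σ < 1 with σ ≠ μ, and set κ = max{μ, σ}. Then there exist constants k₁ > 0 and k₂ > 0 such that for every positive real sequence (ψ_i) and every n ≥ 1: k₁ ∑_{i=1}^{n} κ^{n−i} ψ_i ≤ ∑_{k=1}^{n} μ^{n−k} ∑_{i=1}^{k} σ^{k−i} ψ_i ≤ k₂ ∑_{i=1}^{n} κ^{n−i} ψ_i. -/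
/-!
Exchanging the order of summation writes the double convolution as `∑ᵢ cₙ₋ᵢ ψᵢ` with
`cₘ = ∑_{j ≤ m} μʲ σ^{m-j}`. Both extreme terms `μᵐ` and `σᵐ` occur in `cₘ`, so `κᵐ ≤ cₘ`;
and `cₘ (μ - σ) = μ^{m+1} - σ^{m+1}`, whose absolute value is at most `κ^{m+1}`, so
`cₘ ≤ κ / |μ - σ| · κᵐ`.
-/

open Finset

section GeomSum

variable {K : Type*} [Field K] [LinearOrder K] [IsStrictOrderedRing K] {x y : K}

lemma max_pow_le_sum_pow_mul_pow (hx : 0 ≤ x) (hy : 0 ≤ y) (n : ℕ) :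
    max x y ^ n ≤ ∑ i ∈ range (n + 1), x ^ i * y ^ (n - i) := by
  have hnonneg : ∀ i ∈ range (n + 1), 0 ≤ x ^ i * y ^ (n - i) := fun _ _ => by positivity
  rcases le_total x y with hxy | hxy
  · simpa [max_eq_right hxy] using single_le_sum hnonneg (mem_range.2 n.succ_pos)
  · simpa [max_eq_left hxy] using single_le_sum hnonneg (self_mem_range_succ n)

lemma sum_pow_mul_pow_le (hx : 0 ≤ x) (hy : 0 ≤ y) (hxy : x ≠ y) (n : ℕ) :
    ∑ i ∈ range (n + 1), x ^ i * y ^ (n - i) ≤ max x y / |x - y| * max x y ^ n := by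
  set c := ∑ i ∈ range (n + 1), x ^ i * y ^ (n - i)
  have hc : 0 ≤ c := sum_nonneg fun _ _ => by positivity
  have hc_mul : c * (x - y) = x ^ (n + 1) - y ^ (n + 1) := by
    simpa [c] using geom_sum₂_mul x y (n + 1)
  rw [div_mul_eq_mul_div, ← pow_succ', le_div_iff₀ (abs_pos.2 (sub_ne_zero.2 hxy))]
  calc c * |x - y| = |x ^ (n + 1) - y ^ (n + 1)| := by rw [← hc_mul, abs_mul, abs_of_nonneg hc]
    _ ≤ max x y ^ (n + 1) :=
      abs_sub_le_of_nonneg_of_le (by positivity) (by gcongr; exact le_max_left x y)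
        (by positivity) (by gcongr; exact le_max_right x y)

end GeomSum

lemma sum_Icc_pow_mul_sum_Icc_pow_mul {R : Type*} [CommSemiring R] (a b : R) (ψ : ℕ → R)
    (l n : ℕ) :
    ∑ k ∈ Icc l n, a ^ (n - k) * ∑ i ∈ Icc l k, b ^ (k - i) * ψ i =
      ∑ i ∈ Icc l n, (∑ j ∈ range (n - i + 1), a ^ j * b ^ (n - i - j)) * ψ i := by
  simp_rw [mul_sum, sum_mul]
  rw [sum_comm' (t' := Icc l n) (s' := fun i => Icc i n) (by intro k i; simp only [mem_Icc]; omega)]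
  refine sum_congr rfl fun i hi => ?_
  have hin := (mem_Icc.1 hi).2
  refine sum_nbij' (fun k => n - k) (fun j => n - j) ?_ ?_ ?_ ?_ ?_ <;> intro k hk <;>
    simp only [mem_Icc, mem_range] at hk ⊢ <;> try omega
  rw [show n - i - (n - k) = k - i by omega, mul_assoc]

theorem double_geometric_convolution_comparison_general (μ σ : ℝ)
    (hμ0 : 0 < μ) (hσ0 : 0 < σ) (hne : σ ≠ μ) :
    ∃ k₁ : ℝ, 0 < k₁ ∧ ∃ k₂ : ℝ, 0 < k₂ ∧ ∀ ψ : ℕ → ℝ, (∀ i, 0 < ψ i) → ∀ n : ℕ, 1 ≤ n →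
      k₁ * ∑ i ∈ Finset.Icc 1 n, max μ σ ^ (n - i) * ψ i
          ≤ ∑ k ∈ Finset.Icc 1 n, μ ^ (n - k) * ∑ i ∈ Finset.Icc 1 k, σ ^ (k - i) * ψ i ∧
      ∑ k ∈ Finset.Icc 1 n, μ ^ (n - k) * ∑ i ∈ Finset.Icc 1 k, σ ^ (k - i) * ψ i
          ≤ k₂ * ∑ i ∈ Finset.Icc 1 n, max μ σ ^ (n - i) * ψ i := by
  have hk₂ : 0 < max μ σ / |μ - σ| :=
    div_pos (lt_max_of_lt_left hμ0) (abs_pos.2 (sub_ne_zero.2 hne.symm))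
  refine ⟨1, one_pos, max μ σ / |μ - σ|, hk₂, fun ψ hψ n _ => ?_⟩
  rw [sum_Icc_pow_mul_sum_Icc_pow_mul, one_mul, mul_sum]
  constructor
  · gcongr with i
    · exact (hψ i).le
    · exact max_pow_le_sum_pow_mul_pow hμ0.le hσ0.le _
  · simp_rw [← mul_assoc]
    gcongr with i
    · exact (hψ i).le
    · exact sum_pow_mul_pow_le hμ0.le hσ0.le hne.symm _

/-- Comparison of a doubly geometric convolution with a single geometric convolution:
for `0 < μ, σ < 1` with `σ ≠ μ` and `κ = max μ σ`, there are constants `k₁, k₂ > 0`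
(depending only on `μ` and `σ`) such that for every positive sequence `ψ` and every `n ≥ 1`,
`k₁ ∑_{i=1}^n κ^{n-i} ψ_i ≤ ∑_{k=1}^n μ^{n-k} ∑_{i=1}^k σ^{k-i} ψ_i ≤ k₂ ∑_{i=1}^n κ^{n-i} ψ_i`. -/
theorem double_geometric_convolution_comparison (μ σ : ℝ)
    (hμ0 : 0 < μ) (hμ1 : μ < 1) (hσ0 : 0 < σ) (hσ1 : σ < 1) (hne : σ ≠ μ) :
    ∃ k₁ : ℝ, 0 < k₁ ∧ ∃ k₂ : ℝ, 0 < k₂ ∧ ∀ ψ : ℕ → ℝ, (∀ i, 0 < ψ i) → ∀ n : ℕ, 1 ≤ n →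
      k₁ * ∑ i ∈ Finset.Icc 1 n, max μ σ ^ (n - i) * ψ i
          ≤ ∑ k ∈ Finset.Icc 1 n, μ ^ (n - k) * ∑ i ∈ Finset.Icc 1 k, σ ^ (k - i) * ψ i ∧
      ∑ k ∈ Finset.Icc 1 n, μ ^ (n - k) * ∑ i ∈ Finset.Icc 1 k, σ ^ (k - i) * ψ i
          ≤ k₂ * ∑ i ∈ Finset.Icc 1 n, max μ σ ^ (n - i) * ψ i :=
  double_geometric_convolution_comparison_general μ σ hμ0 hσ0 hne
end
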